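/- If u(t,x,y) is a smooth solution of u_t - u_xx + x u_y = 0, then v = 3t² u_x + t³ u_y - 3(y - tx) u is also a solution of the same equation. -/

import Mathlib

open Real

noncomputable section

abbrev E3 : Type := ℝ × ℝ × ℝ

noncomputable def pd (w : E3) (f : E3 → ℝ) (p : E3) : ℝ := fderiv ℝ f p w

def e1 : E3 := (1, 0, 0)
def e2 : E3 := (0, 1, 0)
def e3 : E3 := (0, 0, 1)

lemma pd_smooth {f : E3 → ℝ} (hf : ContDiff ℝ (⊤ : ℕ∞) f) (w : E3) :
    ContDiff ℝ (⊤ : ℕ∞) (pd w f) :=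
  (hf.fderiv_right (by simp)).clm_apply contDiff_const

lemma hasDerivAt_slice1 {f : E3 → ℝ} (hf : ContDiff ℝ (⊤ : ℕ∞) f) (t x y : ℝ) :
    HasDerivAt (fun s => f (s, x, y)) (pd e1 f (t, x, y)) t := by
  have h1 : HasDerivAt (fun s : ℝ => ((s, x, y) : E3)) e1 t :=
    (hasDerivAt_id t).prodMk ((hasDerivAt_const t x).prodMk (hasDerivAt_const t y))
  exact ((hf.differentiable (by simp)).differentiableAt.hasFDerivAt).comp_hasDerivAt t h1

lemma hasDerivAt_slice2 {f : E3 → ℝ} (hf : ContDiff ℝ (⊤ : ℕ∞) f) (t x y : ℝ) :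
    HasDerivAt (fun r => f (t, r, y)) (pd e2 f (t, x, y)) x := by
  have h1 : HasDerivAt (fun r : ℝ => ((t, r, y) : E3)) e2 x :=
    (hasDerivAt_const x t).prodMk ((hasDerivAt_id x).prodMk (hasDerivAt_const x y))
  exact ((hf.differentiable (by simp)).differentiableAt.hasFDerivAt).comp_hasDerivAt x h1

lemma hasDerivAt_slice3 {f : E3 → ℝ} (hf : ContDiff ℝ (⊤ : ℕ∞) f) (t x y : ℝ) :
    HasDerivAt (fun s => f (t, x, s)) (pd e3 f (t, x, y)) y := by
  have h1 : HasDerivAt (fun s : ℝ => ((t, x, s) : E3)) e3 y :=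
    (hasDerivAt_const y t).prodMk ((hasDerivAt_const y x).prodMk (hasDerivAt_id y))
  exact ((hf.differentiable (by simp)).differentiableAt.hasFDerivAt).comp_hasDerivAt y h1

lemma pd_comm {f : E3 → ℝ} (hf : ContDiff ℝ (⊤ : ℕ∞) f) (a b : E3) (p : E3) :
    pd a (pd b f) p = pd b (pd a f) p := by
  have hdf : ContDiff ℝ (⊤ : ℕ∞) (fun q => fderiv ℝ f q) := hf.fderiv_right (by simp)
  have h2 : HasFDerivAt (fun q => fderiv ℝ f q) (fderiv ℝ (fderiv ℝ f) p) p :=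
    (hdf.differentiable (by simp)).differentiableAt.hasFDerivAt
  have hsymm := second_derivative_symmetric
    (fun q => (hf.differentiable (by simp)).differentiableAt.hasFDerivAt (x := q)) h2 a b
  have key : ∀ w : E3, pd w (pd b f) p = (fderiv ℝ (fderiv ℝ f) p) w b := by
    intro w
    have hb : HasFDerivAt (fun q : E3 => (fderiv ℝ f q) b)
        ((fderiv ℝ (fderiv ℝ f) p).flip b) p := by
      have := h2.clm_apply (hasFDerivAt_const b p)
      simpa using this
    show fderiv ℝ (fun q => fderiv ℝ f q b) p w = _
    rw [hb.fderiv]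
    rfl
  have key' : ∀ w : E3, pd w (pd a f) p = (fderiv ℝ (fderiv ℝ f) p) w a := by
    intro w
    have hb : HasFDerivAt (fun q : E3 => (fderiv ℝ f q) a)
        ((fderiv ℝ (fderiv ℝ f) p).flip a) p := by
      have := h2.clm_apply (hasFDerivAt_const a p)
      simpa using this
    show fderiv ℝ (fun q => fderiv ℝ f q a) p w = _
    rw [hb.fderiv]
    rfl
  rw [key a, key' b, hsymm]

noncomputable def UU (u : ℝ → ℝ → ℝ → ℝ) : E3 → ℝ := fun p => u p.1 p.2.1 p.2.2

end

open ContinuousLinearMap in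
/-- Lie symmetry of the ultra-parabolic Kolmogorov equation u_t - u_xx + x u_y = 0. -/
theorem stmt6 (u : ℝ → ℝ → ℝ → ℝ)
    (hu : ContDiff ℝ (⊤ : ℕ∞) (fun p : ℝ × ℝ × ℝ => u p.1 p.2.1 p.2.2))
    (hsol : ∀ t x y : ℝ,
      deriv (fun s => u s x y) t - deriv (fun s => deriv (fun r => u t r y) s) x
        + x * deriv (fun s => u t x s) y = 0) :
    let v : ℝ → ℝ → ℝ → ℝ := fun t x y =>
      3 * t ^ 2 * deriv (fun r => u t r y) x + t ^ 3 * deriv (fun s => u t x s) y - 3 * (y - t * x) * u t x y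
    ∀ t x y : ℝ,
      deriv (fun s => v s x y) t - deriv (fun s => deriv (fun r => v t r y) s) x
        + x * deriv (fun s => v t x s) y = 0 := by
  intro v t x y
  have hU : ContDiff ℝ (⊤ : ℕ∞) (UU u) := hu
  have h1s : ContDiff ℝ (⊤ : ℕ∞) (pd e1 (UU u)) := pd_smooth hU e1
  have h2s : ContDiff ℝ (⊤ : ℕ∞) (pd e2 (UU u)) := pd_smooth hU e2
  have h3s : ContDiff ℝ (⊤ : ℕ∞) (pd e3 (UU u)) := pd_smooth hU e3
  have h22s : ContDiff ℝ (⊤ : ℕ∞) (pd e2 (pd e2 (UU u))) := pd_smooth h2s e2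
  have h23s : ContDiff ℝ (⊤ : ℕ∞) (pd e2 (pd e3 (UU u))) := pd_smooth h3s e2
  -- the solution equation in pd form
  have hsolP : ∀ q : E3,
      pd e1 (UU u) q - pd e2 (pd e2 (UU u)) q + q.2.1 * pd e3 (UU u) q = 0 := by
    rintro ⟨a, b, c⟩
    have d1 : HasDerivAt (fun s => u s b c) (pd e1 (UU u) (a, b, c)) a :=
      hasDerivAt_slice1 hU a b c
    have d3 : HasDerivAt (fun s => u a b s) (pd e3 (UU u) (a, b, c)) c :=
      hasDerivAt_slice3 hU a b c
    have hin : (fun s : ℝ => deriv (fun r => u a r c) s) = fun s => pd e2 (UU u) (a, s, c) := by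
      funext s
      exact (show HasDerivAt (fun r => u a r c) (pd e2 (UU u) (a, s, c)) s from
        hasDerivAt_slice2 hU a s c).deriv
    have d22 : HasDerivAt (fun s => pd e2 (UU u) (a, s, c))
        (pd e2 (pd e2 (UU u)) (a, b, c)) b := hasDerivAt_slice2 h2s a b c
    have := hsol a b c
    rw [d1.deriv, hin, d22.deriv, d3.deriv] at this
    exact this
  -- derivatives of the solution equation
  have dkey : ∀ (w : E3) (q : E3),
      pd w (pd e1 (UU u)) q - pd w (pd e2 (pd e2 (UU u))) q
        + (q.2.1 * pd w (pd e3 (UU u)) q + pd e3 (UU u) q * w.2.1) = 0 := by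
    intro w q
    set pr : E3 →L[ℝ] ℝ := (fst ℝ ℝ ℝ).comp (snd ℝ ℝ (ℝ × ℝ)) with hprdef
    have hpr : HasFDerivAt (fun r : E3 => r.2.1) pr q := pr.hasFDerivAt
    have hd1 : HasFDerivAt (pd e1 (UU u)) (fderiv ℝ (pd e1 (UU u)) q) q :=
      ((h1s.differentiable (by simp)).differentiableAt).hasFDerivAt
    have hd22 : HasFDerivAt (pd e2 (pd e2 (UU u))) (fderiv ℝ (pd e2 (pd e2 (UU u))) q) q :=
      ((h22s.differentiable (by simp)).differentiableAt).hasFDerivAt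
    have hd3 : HasFDerivAt (pd e3 (UU u)) (fderiv ℝ (pd e3 (UU u)) q) q :=
      ((h3s.differentiable (by simp)).differentiableAt).hasFDerivAt
    have hF : HasFDerivAt
        (fun r : E3 => pd e1 (UU u) r - pd e2 (pd e2 (UU u)) r + r.2.1 * pd e3 (UU u) r)
        ((fderiv ℝ (pd e1 (UU u)) q - fderiv ℝ (pd e2 (pd e2 (UU u))) q)
          + (q.2.1 • fderiv ℝ (pd e3 (UU u)) q
            + pd e3 (UU u) q • ((fst ℝ ℝ ℝ).comp (snd ℝ ℝ (ℝ × ℝ))))) q :=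
      (hd1.sub hd22).add (hpr.mul hd3)
    have hzero : (fun r : E3 => pd e1 (UU u) r - pd e2 (pd e2 (UU u)) r
        + r.2.1 * pd e3 (UU u) r) = fun _ => (0 : ℝ) := funext hsolP
    have hfd := hF.fderiv
    rw [hzero, fderiv_fun_const] at hfd
    have h := congrArg (fun (L : E3 →L[ℝ] ℝ) => L w) hfd.symm
    simp only [ContinuousLinearMap.sub_apply, ContinuousLinearMap.add_apply,
      ContinuousLinearMap.smul_apply, smul_eq_mul, ContinuousLinearMap.zero_apply,
      ContinuousLinearMap.coe_comp', Function.comp, ContinuousLinearMap.coe_fst',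
      ContinuousLinearMap.coe_snd', Pi.zero_apply, ContinuousLinearMap.zero_apply] at h
    simp only [pd] at h ⊢
    linarith [h]
  -- explicit form of v
  have hv : ∀ a b c : ℝ, v a b c =
      3 * a ^ 2 * pd e2 (UU u) (a, b, c) + a ^ 3 * pd e3 (UU u) (a, b, c)
        - 3 * (c - a * b) * UU u (a, b, c) := by
    intro a b c
    have d2 : HasDerivAt (fun r => u a r c) (pd e2 (UU u) (a, b, c)) b :=
      hasDerivAt_slice2 hU a b c
    have d3 : HasDerivAt (fun s => u a b s) (pd e3 (UU u) (a, b, c)) c :=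
      hasDerivAt_slice3 hU a b c
    show 3 * a ^ 2 * deriv (fun r => u a r c) b + a ^ 3 * deriv (fun s => u a b s) c
        - 3 * (c - a * b) * u a b c = _
    rw [d2.deriv, d3.deriv]
    rfl
  -- t-derivative of v
  have hvt : deriv (fun s => v s x y) t =
      6 * t * pd e2 (UU u) (t, x, y) + 3 * t ^ 2 * pd e1 (pd e2 (UU u)) (t, x, y)
        + 3 * t ^ 2 * pd e3 (UU u) (t, x, y) + t ^ 3 * pd e1 (pd e3 (UU u)) (t, x, y)
        + 3 * x * UU u (t, x, y) - 3 * (y - t * x) * pd e1 (UU u) (t, x, y) := by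
    have hfe : (fun s => v s x y) = fun s =>
        3 * s ^ 2 * pd e2 (UU u) (s, x, y) + s ^ 3 * pd e3 (UU u) (s, x, y)
          - 3 * (y - s * x) * UU u (s, x, y) := funext fun s => hv s x y
    rw [hfe]
    have c1 : HasDerivAt (fun s : ℝ => 3 * s ^ 2) (6 * t) t := by
      have := (hasDerivAt_pow 2 t).const_mul (3 : ℝ)
      exact this.congr_deriv (by push_cast; ring)
    have c2 : HasDerivAt (fun s : ℝ => s ^ 3) (3 * t ^ 2) t := by
      have := hasDerivAt_pow 3 t
      exact this.congr_deriv (by push_cast; ring)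
    have c3 : HasDerivAt (fun s : ℝ => 3 * (y - s * x)) (-(3 * x)) t := by
      have := (((hasDerivAt_id t).mul_const x).const_sub y).const_mul (3 : ℝ)
      exact this.congr_deriv (by ring)
    have d1 : HasDerivAt (fun s => pd e2 (UU u) (s, x, y)) (pd e1 (pd e2 (UU u)) (t, x, y)) t :=
      hasDerivAt_slice1 h2s t x y
    have d2 : HasDerivAt (fun s => pd e3 (UU u) (s, x, y)) (pd e1 (pd e3 (UU u)) (t, x, y)) t :=
      hasDerivAt_slice1 h3s t x y
    have d3 : HasDerivAt (fun s => UU u (s, x, y)) (pd e1 (UU u) (t, x, y)) t :=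
      hasDerivAt_slice1 hU t x y
    have := (((c1.mul d1).add (c2.mul d2)).sub (c3.mul d3)).deriv
    refine this.trans ?_; ring
  -- x-derivative of v, at any base point b
  have hvx : ∀ b : ℝ, deriv (fun r => v t r y) b =
      3 * t ^ 2 * pd e2 (pd e2 (UU u)) (t, b, y) + t ^ 3 * pd e2 (pd e3 (UU u)) (t, b, y)
        + 3 * t * UU u (t, b, y) - 3 * (y - t * b) * pd e2 (UU u) (t, b, y) := by
    intro b
    have hfe : (fun r => v t r y) = fun r =>
        3 * t ^ 2 * pd e2 (UU u) (t, r, y) + t ^ 3 * pd e3 (UU u) (t, r, y)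
          - 3 * (y - t * r) * UU u (t, r, y) := funext fun r => hv t r y
    rw [hfe]
    have c3 : HasDerivAt (fun r : ℝ => 3 * (y - t * r)) (-(3 * t)) b := by
      have := (((hasDerivAt_id b).const_mul t).const_sub y).const_mul (3 : ℝ)
      exact this.congr_deriv (by ring)
    have d1 : HasDerivAt (fun r => pd e2 (UU u) (t, r, y)) (pd e2 (pd e2 (UU u)) (t, b, y)) b :=
      hasDerivAt_slice2 h2s t b y
    have d2 : HasDerivAt (fun r => pd e3 (UU u) (t, r, y)) (pd e2 (pd e3 (UU u)) (t, b, y)) b :=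
      hasDerivAt_slice2 h3s t b y
    have d3 : HasDerivAt (fun r => UU u (t, r, y)) (pd e2 (UU u) (t, b, y)) b :=
      hasDerivAt_slice2 hU t b y
    have := (((d1.const_mul (3 * t ^ 2)).add (d2.const_mul (t ^ 3))).sub (c3.mul d3)).deriv
    refine this.trans ?_; ring
  -- second x-derivative of v
  have hvxx : deriv (fun s => deriv (fun r => v t r y) s) x =
      3 * t ^ 2 * pd e2 (pd e2 (pd e2 (UU u))) (t, x, y)
        + t ^ 3 * pd e2 (pd e2 (pd e3 (UU u))) (t, x, y)
        + 6 * t * pd e2 (UU u) (t, x, y) - 3 * (y - t * x) * pd e2 (pd e2 (UU u)) (t, x, y) := by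
    have hfe : (fun s : ℝ => deriv (fun r => v t r y) s) = fun s =>
        3 * t ^ 2 * pd e2 (pd e2 (UU u)) (t, s, y) + t ^ 3 * pd e2 (pd e3 (UU u)) (t, s, y)
          + 3 * t * UU u (t, s, y) - 3 * (y - t * s) * pd e2 (UU u) (t, s, y) :=
      funext fun s => hvx s
    rw [hfe]
    have c3 : HasDerivAt (fun r : ℝ => 3 * (y - t * r)) (-(3 * t)) x := by
      have := (((hasDerivAt_id x).const_mul t).const_sub y).const_mul (3 : ℝ)
      exact this.congr_deriv (by ring)
    have d1 : HasDerivAt (fun r => pd e2 (pd e2 (UU u)) (t, r, y))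
        (pd e2 (pd e2 (pd e2 (UU u))) (t, x, y)) x := hasDerivAt_slice2 h22s t x y
    have d2 : HasDerivAt (fun r => pd e2 (pd e3 (UU u)) (t, r, y))
        (pd e2 (pd e2 (pd e3 (UU u))) (t, x, y)) x := hasDerivAt_slice2 h23s t x y
    have d3 : HasDerivAt (fun r => UU u (t, r, y)) (pd e2 (UU u) (t, x, y)) x :=
      hasDerivAt_slice2 hU t x y
    have d4 : HasDerivAt (fun r => pd e2 (UU u) (t, r, y)) (pd e2 (pd e2 (UU u)) (t, x, y)) x :=
      hasDerivAt_slice2 h2s t x y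
    have := ((((d1.const_mul (3 * t ^ 2)).add (d2.const_mul (t ^ 3))).add
      (d3.const_mul (3 * t))).sub (c3.mul d4)).deriv
    refine this.trans ?_; ring
  -- y-derivative of v
  have hvy : deriv (fun s => v t x s) y =
      3 * t ^ 2 * pd e3 (pd e2 (UU u)) (t, x, y) + t ^ 3 * pd e3 (pd e3 (UU u)) (t, x, y)
        - 3 * UU u (t, x, y) - 3 * (y - t * x) * pd e3 (UU u) (t, x, y) := by
    have hfe : (fun s => v t x s) = fun s =>
        3 * t ^ 2 * pd e2 (UU u) (t, x, s) + t ^ 3 * pd e3 (UU u) (t, x, s)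
          - 3 * (s - t * x) * UU u (t, x, s) := funext fun s => hv t x s
    rw [hfe]
    have c3 : HasDerivAt (fun s : ℝ => 3 * (s - t * x)) (3 : ℝ) y := by
      have := ((hasDerivAt_id y).sub_const (t * x)).const_mul (3 : ℝ)
      exact this.congr_deriv (by ring)
    have d1 : HasDerivAt (fun s => pd e2 (UU u) (t, x, s)) (pd e3 (pd e2 (UU u)) (t, x, y)) y :=
      hasDerivAt_slice3 h2s t x y
    have d2 : HasDerivAt (fun s => pd e3 (UU u) (t, x, s)) (pd e3 (pd e3 (UU u)) (t, x, y)) y :=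
      hasDerivAt_slice3 h3s t x y
    have d3 : HasDerivAt (fun s => UU u (t, x, s)) (pd e3 (UU u) (t, x, y)) y :=
      hasDerivAt_slice3 hU t x y
    have := (((d1.const_mul (3 * t ^ 2)).add (d2.const_mul (t ^ 3))).sub (c3.mul d3)).deriv
    refine this.trans ?_; ring
  rw [hvt, hvxx, hvy]
  -- symmetry of second derivatives
  have s12 : pd e1 (pd e2 (UU u)) (t, x, y) = pd e2 (pd e1 (UU u)) (t, x, y) :=
    pd_comm hU e1 e2 (t, x, y)
  have s13 : pd e1 (pd e3 (UU u)) (t, x, y) = pd e3 (pd e1 (UU u)) (t, x, y) :=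
    pd_comm hU e1 e3 (t, x, y)
  have s23 : pd e3 (pd e2 (UU u)) (t, x, y) = pd e2 (pd e3 (UU u)) (t, x, y) :=
    (pd_comm hU e2 e3 (t, x, y)).symm
  have s223 : pd e2 (pd e2 (pd e3 (UU u))) (t, x, y)
      = pd e3 (pd e2 (pd e2 (UU u))) (t, x, y) := by
    have hinner : pd e2 (pd e3 (UU u)) = pd e3 (pd e2 (UU u)) :=
      funext fun q => pd_comm hU e2 e3 q
    rw [hinner]
    exact pd_comm h2s e2 e3 (t, x, y)
  have Ix := dkey e2 (t, x, y)
  have Iy := dkey e3 (t, x, y)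
  have h0 := hsolP (t, x, y)
  simp only [show e2.2.1 = (1:ℝ) from rfl, show e3.2.1 = (0:ℝ) from rfl,
    mul_one, mul_zero, add_zero] at Ix Iy
  simp only at h0
  rw [s12, s13, s223, s23]
  linear_combination (3 * t ^ 2) * Ix + (t ^ 3) * Iy - (3 * (y - t * x)) * h0
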